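/- Let A, B ∈ S^n with A ≠ B, and suppose the map z ↦ ff_-(z,B) = {u ∈ ℝ^{n-1} : (u,z)ᵀ B (u,z) ≤ 0} is lower semicontinuous at z = 0 on [0,1]. Then ff_-(1,B) ⊆ ff_+(1,A) if and only if J_-(B) ⊆ J_+(A), where ff_+(1,A) = {u : (u,1)ᵀ A (u,1) ≥ 0}, J_-(B) = {X ∈ S^n_+ : ⟨B,X⟩ ≤ 0}, and J_+(A) = {X ∈ S^n_+ : ⟨A,X⟩ ≥ 0}. -/

import Mathlib

/-! Both inclusions are equivalent to the homogeneous implication `vᵀBv ≤ 0 → 0 ≤ vᵀAv` for all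
`v ∈ ℝⁿ`. For the slice `z = 1` this is dehomogenization: a vector with nonzero last coordinate
rescales to one with last coordinate `1`, and one with last coordinate `0` is approximated, by the
lower semicontinuity of `z ↦ ff_-(z,B)` at `0`, by vectors with small positive last coordinate.
For the PSD cone, write `X = ∑ vᵢvᵢᵀ`. While some `vᵢ` has positive and another negative
`B`-value, a rotation in their plane (intermediate value theorem) turns the pair into a
`B`-isotropic vector, on which `A` is nonnegative, plus one other vector, without changing the sums
of the `A`- and `B`-values; this induction ends with all `B`-values nonpositive. -/

open Matrix

/-- q(u,z,B) = (u,z)ᵀ B (u,z). -/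
def qform {m : ℕ} (u : Fin m → ℝ) (z : ℝ) (B : Matrix (Fin (m + 1)) (Fin (m + 1)) ℝ) : ℝ :=
  (Fin.snoc u z : Fin (m + 1) → ℝ) ⬝ᵥ B.mulVec (Fin.snoc u z)

/-- ff_-(z,B) = {u : q(u,z,B) ≤ 0}. -/
def ffm {m : ℕ} (z : ℝ) (B : Matrix (Fin (m + 1)) (Fin (m + 1)) ℝ) : Set (Fin m → ℝ) :=
  {u | qform u z B ≤ 0}

/-- ff_+(z,A) = {u : q(u,z,A) ≥ 0}. -/
def ffp {m : ℕ} (z : ℝ) (A : Matrix (Fin (m + 1)) (Fin (m + 1)) ℝ) : Set (Fin m → ℝ) :=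
  {u | 0 ≤ qform u z A}

/-- J_-(B) = {X ∈ S^n_+ : ⟨B,X⟩ ≤ 0}. -/
def Jm {k : ℕ} (B : Matrix (Fin k) (Fin k) ℝ) : Set (Matrix (Fin k) (Fin k) ℝ) :=
  {X | X.PosSemidef ∧ (B * X).trace ≤ 0}

/-- J_+(A) = {X ∈ S^n_+ : ⟨A,X⟩ ≥ 0}. -/
def Jp {k : ℕ} (A : Matrix (Fin k) (Fin k) ℝ) : Set (Matrix (Fin k) (Fin k) ℝ) :=
  {X | X.PosSemidef ∧ 0 ≤ (A * X).trace}

namespace QuadraticMap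

variable {V : Type*} [AddCommGroup V] [Module ℝ V]

lemma map_smul_add_smul (Q : QuadraticForm ℝ V) (u w : V) (c s : ℝ) :
    Q (c • u + s • w) = c ^ 2 * Q u + s ^ 2 * Q w + c * s * polar Q u w := by
  have h : polar Q (c • u) (s • w) = c * s * polar Q u w := by
    rw [polar_smul_left, polar_smul_right, smul_eq_mul, smul_eq_mul]
    ring
  rw [polar, QuadraticMap.map_smul, QuadraticMap.map_smul, smul_eq_mul, smul_eq_mul] at h
  linear_combination h

lemma map_rotate_add_map_rotate (Q : QuadraticForm ℝ V) (u w : V) {c s : ℝ}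
    (hcs : c ^ 2 + s ^ 2 = 1) :
    Q (c • u + s • w) + Q ((-s) • u + c • w) = Q u + Q w := by
  rw [map_smul_add_smul, map_smul_add_smul]
  linear_combination (Q u + Q w) * hcs

lemma exists_rotate_eq_zero (Q : QuadraticForm ℝ V) {u w : V} (hu : 0 < Q u) (hw : Q w < 0) :
    ∃ c s : ℝ, c ^ 2 + s ^ 2 = 1 ∧ Q (c • u + s • w) = 0 := by
  set f : ℝ → ℝ := fun θ ↦ Q (Real.cos θ • u + Real.sin θ • w)
  have hf : Continuous f := by
    simp only [f, map_smul_add_smul]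
    fun_prop
  have h0 : (0 : ℝ) ∈ Set.Icc (f (Real.pi / 2)) (f 0) := by
    simp only [f, Real.cos_zero, Real.sin_zero, Real.cos_pi_div_two, Real.sin_pi_div_two,
      zero_smul, one_smul, add_zero, zero_add]
    exact ⟨hw.le, hu.le⟩
  obtain ⟨θ, -, hθ⟩ := intermediate_value_Icc' Real.pi_div_two_pos.le hf.continuousOn h0
  exact ⟨Real.cos θ, Real.sin θ, by rw [add_comm, Real.sin_sq_add_cos_sq], hθ⟩

theorem sum_map_nonneg_of_sum_map_nonpos (QA QB : QuadraticForm ℝ V)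
    (h : ∀ v, QB v ≤ 0 → 0 ≤ QA v) (s : Multiset V) (hs : (s.map QB).sum ≤ 0) :
    0 ≤ (s.map QA).sum := by
  by_cases hall : ∀ v ∈ s, QB v ≤ 0
  · exact Multiset.sum_nonneg fun a ha ↦ by
      obtain ⟨v, hv, rfl⟩ := Multiset.mem_map.mp ha
      exact h v (hall v hv)
  push Not at hall
  obtain ⟨u, hu, hQu⟩ := hall
  obtain ⟨t, rfl⟩ := Multiset.exists_cons_of_mem hu
  obtain ⟨w, hw, hQw⟩ : ∃ w ∈ t, QB w < 0 := by
    by_contra! hnonneg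
    have : 0 ≤ (t.map QB).sum := Multiset.sum_nonneg fun a ha ↦ by
      obtain ⟨v, hv, rfl⟩ := Multiset.mem_map.mp ha
      exact hnonneg v hv
    simp only [Multiset.map_cons, Multiset.sum_cons] at hs
    linarith
  obtain ⟨r, rfl⟩ := Multiset.exists_cons_of_mem hw
  obtain ⟨c, d, hcs, hzero⟩ := exists_rotate_eq_zero QB hQu hQw
  have hB := map_rotate_add_map_rotate QB u w hcs
  have hA := map_rotate_add_map_rotate QA u w hcs
  have hrest := sum_map_nonneg_of_sum_map_nonpos QA QB h (((-d) • u + c • w) ::ₘ r) (by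
    simp only [Multiset.map_cons, Multiset.sum_cons] at hs ⊢
    linarith)
  simp only [Multiset.map_cons, Multiset.sum_cons] at hrest ⊢
  linarith [h _ hzero.le]
termination_by Multiset.card s
decreasing_by subst_vars; simp

end QuadraticMap

lemma Matrix.toQuadraticForm'_apply {n : Type*} [Fintype n] [DecidableEq n]
    (M : Matrix n n ℝ) (v : n → ℝ) : M.toQuadraticForm' v = v ⬝ᵥ M *ᵥ v := by
  simp [toQuadraticForm', toLinearMap₂'_apply']

lemma Matrix.trace_mul_vecMulVec_self {n : Type*} [Fintype n] [DecidableEq n]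
    (M : Matrix n n ℝ) (v : n → ℝ) : (M * vecMulVec v v).trace = M.toQuadraticForm' v := by
  rw [mul_vecMulVec, trace_vecMulVec, dotProduct_comm, toQuadraticForm'_apply]

lemma Jm_subset_Jp_iff {k : ℕ} (A B : Matrix (Fin k) (Fin k) ℝ) :
    Jm B ⊆ Jp A ↔ ∀ v, B.toQuadraticForm' v ≤ 0 → 0 ≤ A.toQuadraticForm' v := by
  constructor
  · intro hJ v hv
    have hX : vecMulVec v v ∈ Jm B :=
      ⟨by simpa using posSemidef_vecMulVec_self_star v, by rwa [trace_mul_vecMulVec_self]⟩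
    simpa only [trace_mul_vecMulVec_self] using (hJ hX).2
  · rintro h X ⟨hX, hBX⟩
    obtain ⟨r, v, rfl⟩ := posSemidef_iff_eq_sum_vecMulVec.mp hX
    have htrace (M : Matrix (Fin k) (Fin k) ℝ) :
        (M * ∑ i, vecMulVec (v i) (star (v i))).trace
          = ((Finset.univ.val.map v).map M.toQuadraticForm').sum := by
      rw [Multiset.map_map, ← Finset.sum_eq_multiset_sum, Matrix.mul_sum, trace_sum]
      simp only [star_trivial, trace_mul_vecMulVec_self, Function.comp_apply]
    refine ⟨hX, ?_⟩
    rw [htrace] at hBX ⊢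
    exact QuadraticMap.sum_map_nonneg_of_sum_map_nonpos _ _ h _ hBX

lemma qform_eq_toQuadraticForm' {m : ℕ} (u : Fin m → ℝ) (z : ℝ)
    (M : Matrix (Fin (m + 1)) (Fin (m + 1)) ℝ) :
    qform u z M = M.toQuadraticForm' (Fin.snoc u z) := by
  rw [qform, toQuadraticForm'_apply]

lemma qform_smul {m : ℕ} (u : Fin m → ℝ) (z c : ℝ) (M : Matrix (Fin (m + 1)) (Fin (m + 1)) ℝ) :
    qform (c • u) (c * z) M = c ^ 2 * qform u z M := by
  have hsnoc : (Fin.snoc (c • u) (c * z) : Fin (m + 1) → ℝ) = c • Fin.snoc u z := by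
    ext i
    refine Fin.lastCases ?_ (fun j ↦ ?_) i <;> simp
  rw [qform_eq_toQuadraticForm', qform_eq_toQuadraticForm', hsnoc, QuadraticMap.map_smul,
    smul_eq_mul, sq]

lemma continuous_qform {m : ℕ} (M : Matrix (Fin (m + 1)) (Fin (m + 1)) ℝ) :
    Continuous fun p : (Fin m → ℝ) × ℝ ↦ qform p.1 p.2 M := by
  simp only [qform, dotProduct, mulVec]
  fun_prop

section Homogenization

open Topology

def FfmLowerSemicontinuousAtZero {m : ℕ} (B : Matrix (Fin (m + 1)) (Fin (m + 1)) ℝ) : Prop :=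
  ∀ W : Set (Fin m → ℝ), IsOpen W → (W ∩ ffm 0 B).Nonempty →
    ∃ ε : ℝ, 0 < ε ∧ ε ≤ 1 ∧ ∀ z : ℝ, 0 ≤ z → z < ε → (W ∩ ffm z B).Nonempty

variable {m : ℕ} {A B : Matrix (Fin (m + 1)) (Fin (m + 1)) ℝ}

lemma qform_nonneg_of_ne_zero (hsub : ffm 1 B ⊆ ffp 1 A) {u : Fin m → ℝ} {z : ℝ} (hz : z ≠ 0)
    (hu : qform u z B ≤ 0) : 0 ≤ qform u z A := by
  have hscale (M : Matrix (Fin (m + 1)) (Fin (m + 1)) ℝ) :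
      qform (z⁻¹ • u) 1 M = z⁻¹ ^ 2 * qform u z M := by
    rw [← qform_smul, inv_mul_cancel₀ hz]
  have hA : 0 ≤ z⁻¹ ^ 2 * qform u z A :=
    hscale A ▸ hsub (show qform (z⁻¹ • u) 1 B ≤ 0 by
      rw [hscale]; exact mul_nonpos_of_nonneg_of_nonpos (sq_nonneg _) hu)
  exact (mul_nonneg_iff_of_pos_left (by positivity)).mp hA

lemma qform_zero_nonneg (hsub : ffm 1 B ⊆ ffp 1 A)
    (hlsc : FfmLowerSemicontinuousAtZero B) {u : Fin m → ℝ} (hu : qform u 0 B ≤ 0) :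
    0 ≤ qform u 0 A := by
  by_contra! hneg
  have hopen : IsOpen {p : (Fin m → ℝ) × ℝ | qform p.1 p.2 A < 0} :=
    isOpen_lt (continuous_qform A) continuous_const
  obtain ⟨U, V, hU, hV, huU, h0V, hUV⟩ := isOpen_prod_iff.mp hopen u 0 hneg
  obtain ⟨ε, hε, -, hlscε⟩ := hlsc U hU ⟨u, huU, hu⟩
  have hsmall : ∀ᶠ z in 𝓝[>] 0, z ∈ V ∧ z < ε ∧ 0 < z := by
    filter_upwards [nhdsWithin_le_nhds (hV.mem_nhds h0V), nhdsWithin_le_nhds (Iio_mem_nhds hε),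
      self_mem_nhdsWithin] with z hzV hzε hz
    exact ⟨hzV, hzε, hz⟩
  obtain ⟨z, hzV, hzε, hz⟩ := hsmall.exists
  obtain ⟨u', hu'U, hu'B⟩ := hlscε z hz.le hzε
  have hA' : qform u' z A < 0 := hUV (Set.mk_mem_prod hu'U hzV)
  exact hA'.not_ge (qform_nonneg_of_ne_zero hsub hz.ne' hu'B)

lemma ffm_one_subset_ffp_one_iff (hlsc : FfmLowerSemicontinuousAtZero B) :
    ffm 1 B ⊆ ffp 1 A ↔ ∀ v, B.toQuadraticForm' v ≤ 0 → 0 ≤ A.toQuadraticForm' v := by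
  constructor
  · intro hsub v hv
    rw [← Fin.snoc_init_self v, ← qform_eq_toQuadraticForm'] at hv ⊢
    rcases eq_or_ne (v (Fin.last m)) 0 with hz | hz
    · rw [hz] at hv ⊢
      exact qform_zero_nonneg hsub hlsc hv
    · exact qform_nonneg_of_ne_zero hsub hz hv
  · intro h u hu
    change 0 ≤ qform u 1 A
    rw [qform_eq_toQuadraticForm']
    exact h _ (qform_eq_toQuadraticForm' u 1 B ▸ hu)

end Homogenization

theorem stmt15_general {m : ℕ} (A B : Matrix (Fin (m + 1)) (Fin (m + 1)) ℝ)
    (hlsc : ∀ W : Set (Fin m → ℝ), IsOpen W → (W ∩ ffm 0 B).Nonempty →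
      ∃ ε : ℝ, 0 < ε ∧ ε ≤ 1 ∧ ∀ z : ℝ, 0 ≤ z → z < ε → (W ∩ ffm z B).Nonempty) :
    ffm 1 B ⊆ ffp 1 A ↔ Jm B ⊆ Jp A := by
  rw [ffm_one_subset_ffp_one_iff hlsc, Jm_subset_Jp_iff]

theorem stmt15 {m : ℕ} (A B : Matrix (Fin (m + 1)) (Fin (m + 1)) ℝ)
    (hA : A.IsSymm) (hB : B.IsSymm) (hAB : A ≠ B)
    (hlsc : ∀ W : Set (Fin m → ℝ), IsOpen W → (W ∩ ffm 0 B).Nonempty →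
      ∃ ε : ℝ, 0 < ε ∧ ε ≤ 1 ∧ ∀ z : ℝ, 0 ≤ z → z < ε → (W ∩ ffm z B).Nonempty) :
    ffm 1 B ⊆ ffp 1 A ↔ Jm B ⊆ Jp A :=
  stmt15_general A B hlsc
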